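/- There exist Borel probability measures μ and ν on [0,1] ⊂ ℝ with dim_F μ = 0 and dim_F ν = 0 but dim_F(μ + ν) = 1. Concretely, one can take dμ = g dx and dν = h dx where g(x) = 1 + Σ_{k≥1} 2^{-k} sin(2π·2^{k²} x) and h(x) = 2 − g(x). -/

import Mathlib

/-!
Write `g = 1 + S` with `S x = ∑ 2^{-k} sin (2π N_k x)`, `N_k = 2^{k²}`; then `|S| ≤ 1`, so `g` and
`h = 2 - g` are probability densities on `[0,1]`. Orthogonality of `x ↦ e^{2πinx}` on `[0,1]` gives
`μ̂(N_k) = -i 2^{-k}/2`. Since `μ + ν` is twice Lebesgue measure on `[0,1]`, whose transform vanishes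
at nonzero integers, also `|ν̂(N_k)| = 2^{-k}/2`. As `2^{-k}` is not `O(N_k^{-ε})` for any `ε > 0`,
both dimensions are `0`, whereas the transform of `μ + ν` is `O(min(1, 1/|ξ|)) = O(|ξ|^{-1/2})`.
-/

open MeasureTheory

noncomputable def FT1 (μ : Measure ℝ) (ξ : ℝ) : ℂ :=
  ∫ x, Complex.exp (-(2 * Real.pi * Complex.I * (ξ * x : ℝ))) ∂μ

/-- Fourier dimension of a finite Borel measure on `ℝ`. -/
noncomputable def fDim1 (μ : Measure ℝ) : ℝ :=
  sSup {s : ℝ | 0 ≤ s ∧ s ≤ 1 ∧ ∃ C : ℝ, ∀ ξ : ℝ, ξ ≠ 0 →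
    ‖FT1 μ ξ‖ ≤ C * ‖ξ‖ ^ (-s / 2)}

/-- The density `g(x) = 1 + ∑_{k ≥ 1} 2^{-k} sin(2π 2^{k²} x)`. -/
noncomputable def gdens (x : ℝ) : ℝ :=
  1 + ∑' k : ℕ, (2 : ℝ) ^ (-((k : ℝ) + 1)) *
    Real.sin (2 * Real.pi * 2 ^ (((k : ℝ) + 1) ^ 2) * x)

noncomputable def hdens (x : ℝ) : ℝ := 2 - gdens x

open Real Set Filter
open Complex (I)

noncomputable def fourierKernel (ξ x : ℝ) : ℂ := Complex.exp (-(2 * π * I * (ξ * x : ℝ)))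

lemma FT1_eq_integral_fourierKernel (ρ : Measure ℝ) (ξ : ℝ) :
    FT1 ρ ξ = ∫ x, fourierKernel ξ x ∂ρ := rfl

@[fun_prop]
lemma continuous_fourierKernel (ξ : ℝ) : Continuous (fourierKernel ξ) := by
  unfold fourierKernel; fun_prop

lemma norm_fourierKernel (ξ x : ℝ) : ‖fourierKernel ξ x‖ = 1 := by
  rw [fourierKernel, show -(2 * π * I * (ξ * x : ℝ)) = ((-(2 * π * (ξ * x)) : ℝ) : ℂ) * I by
    push_cast; ring]
  exact Complex.norm_exp_ofReal_mul_I _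

lemma integral_fourierKernel {ξ : ℝ} (hξ : ξ ≠ 0) :
    ∫ x in (0:ℝ)..1, fourierKernel ξ x = (fourierKernel ξ 1 - 1) / (-(2 * π * I * ξ)) := by
  have hc : -(2 * π * I * ξ) ≠ 0 := by simp [hξ, pi_ne_zero]
  have hlin (x : ℝ) : fourierKernel ξ x = Complex.exp (-(2 * π * I * ξ) * x) := by
    rw [fourierKernel]; push_cast; ring_nf
  simp_rw [hlin, integral_exp_mul_complex hc]
  simp

lemma integral_fourierKernel_intCast (m : ℤ) :
    ∫ x in (0:ℝ)..1, fourierKernel m x = if m = 0 then 1 else 0 := by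
  split_ifs with hm
  · simp [hm, fourierKernel]
  · rw [integral_fourierKernel (by exact_mod_cast hm), fourierKernel,
      show -(2 * π * I * ((m * 1 : ℝ) : ℂ)) = ((-m : ℤ) : ℂ) * (2 * π * I) by push_cast; ring,
      Complex.exp_int_mul_two_pi_mul_I, sub_self, zero_div]

lemma integral_fourierKernel_natCast {n : ℕ} (hn : n ≠ 0) :
    ∫ x in (0:ℝ)..1, fourierKernel n x = 0 := by
  simpa [hn] using integral_fourierKernel_intCast n

lemma norm_integral_fourierKernel_le {ξ : ℝ} (hξ : ξ ≠ 0) :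
    ‖∫ x in (0:ℝ)..1, fourierKernel ξ x‖ ≤ 1 / (π * |ξ|) := by
  have hnum : ‖fourierKernel ξ 1 - 1‖ ≤ 2 := by
    calc _ ≤ ‖fourierKernel ξ 1‖ + ‖(1 : ℂ)‖ := norm_sub_le _ _
      _ = 2 := by rw [norm_fourierKernel, norm_one]; norm_num
  have hden : ‖-(2 * π * I * (ξ : ℂ))‖ = 2 * π * |ξ| := by
    simp [abs_of_pos pi_pos]
  rw [integral_fourierKernel hξ, norm_div, hden]
  calc _ ≤ 2 / (2 * π * |ξ|) := by gcongr
    _ = 1 / (π * |ξ|) := by field_simp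

lemma norm_integral_fourierKernel_le_rpow {ξ : ℝ} (hξ : ξ ≠ 0) :
    ‖∫ x in (0:ℝ)..1, fourierKernel ξ x‖ ≤ ‖ξ‖ ^ (-1 / 2 : ℝ) := by
  have hξ' : 0 < |ξ| := abs_pos.mpr hξ
  rw [Real.norm_eq_abs]
  rcases le_or_gt |ξ| 1 with hle | hgt
  · calc _ ≤ 1 := by
          simpa using intervalIntegral.norm_integral_le_of_norm_le_const (a := 0) (b := 1)
            (fun x _ => (norm_fourierKernel ξ x).le)
      _ ≤ |ξ| ^ (-1 / 2 : ℝ) := one_le_rpow_of_pos_of_le_one_of_nonpos hξ' hle (by norm_num)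
  · calc _ ≤ 1 / (π * |ξ|) := norm_integral_fourierKernel_le hξ
      _ ≤ 1 / |ξ| := by gcongr; nlinarith [pi_gt_three]
      _ = |ξ| ^ (-1 : ℝ) := by rw [rpow_neg_one, one_div]
      _ ≤ |ξ| ^ (-1 / 2 : ℝ) := rpow_le_rpow_of_exponent_le hgt.le (by norm_num)

lemma integral_sin_mul_fourierKernel (n m : ℕ) (hn : 0 < n) :
    ∫ x in (0:ℝ)..1, (sin (2 * π * n * x) : ℂ) * fourierKernel m x =
      if n = m then -(I / 2) else 0 := by
  have hsplit (x : ℝ) : (sin (2 * π * n * x) : ℂ) * fourierKernel m x =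
      I / 2 * (fourierKernel (n + m : ℤ) x - fourierKernel (m - n : ℤ) x) := by
    have hsum : -(2 * π * I * (((n + m : ℤ) : ℝ) * x : ℝ)) =
        -((2 * π * n * x : ℝ) : ℂ) * I + -(2 * π * I * (m * x : ℝ)) := by push_cast; ring
    have hdiff : -(2 * π * I * (((m - n : ℤ) : ℝ) * x : ℝ)) =
        ((2 * π * n * x : ℝ) : ℂ) * I + -(2 * π * I * (m * x : ℝ)) := by push_cast; ring
    rw [fourierKernel, fourierKernel, fourierKernel, Complex.ofReal_sin, Complex.sin, hsum, hdiff,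
      Complex.exp_add, Complex.exp_add]
    ring
  have hint (j : ℤ) : IntervalIntegrable (fourierKernel j) volume 0 1 :=
    (continuous_fourierKernel j).intervalIntegrable 0 1
  simp_rw [hsplit]
  rw [intervalIntegral.integral_const_mul, intervalIntegral.integral_sub (hint _) (hint _),
    integral_fourierKernel_intCast, integral_fourierKernel_intCast]
  have hsum : (n + m : ℤ) ≠ 0 := by omega
  have hdiff : (m - n : ℤ) = 0 ↔ n = m := by omega
  simp only [if_neg hsum, hdiff]
  split_ifs <;> ring

section FourierDimension

variable (ρ : Measure ℝ)

lemma integrable_fourierKernel [IsFiniteMeasure ρ] (ξ : ℝ) : Integrable (fourierKernel ξ) ρ :=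
  (integrable_const (1 : ℝ)).mono' (continuous_fourierKernel ξ).aestronglyMeasurable
    (ae_of_all _ fun x => (norm_fourierKernel ξ x).le)

lemma norm_FT1_le [IsFiniteMeasure ρ] (ξ : ℝ) : ‖FT1 ρ ξ‖ ≤ ρ.real univ := by
  calc ‖FT1 ρ ξ‖ ≤ ∫ x, ‖fourierKernel ξ x‖ ∂ρ := norm_integral_le_integral_norm _
    _ = ρ.real univ := by
        simp only [norm_fourierKernel, integral_const, smul_eq_mul, mul_one]

lemma FT1_add (ρ' : Measure ℝ) [IsFiniteMeasure ρ] [IsFiniteMeasure ρ'] (ξ : ℝ) :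
    FT1 (ρ + ρ') ξ = FT1 ρ ξ + FT1 ρ' ξ :=
  integral_add_measure (integrable_fourierKernel ρ ξ) (integrable_fourierKernel ρ' ξ)

lemma fDim1_eq_zero_of_tendsto [IsFiniteMeasure ρ] (ξ : ℕ → ℝ) (hξ : ∀ k, ξ k ≠ 0)
    (h : ∀ s : ℝ, 0 < s → Tendsto (fun k => ‖FT1 ρ (ξ k)‖ / ‖ξ k‖ ^ (-s / 2)) atTop atTop) :
    fDim1 ρ = 0 := by
  have hzero : (0 : ℝ) ∈ {s : ℝ | 0 ≤ s ∧ s ≤ 1 ∧ ∃ C : ℝ, ∀ ξ : ℝ, ξ ≠ 0 →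
      ‖FT1 ρ ξ‖ ≤ C * ‖ξ‖ ^ (-s / 2)} :=
    ⟨le_rfl, zero_le_one, ρ.real univ, fun ξ _ => by simpa using norm_FT1_le ρ ξ⟩
  refine le_antisymm (csSup_le ⟨0, hzero⟩ fun s ⟨_, _, C, hC⟩ => ?_)
    (le_csSup ⟨1, fun s hs => hs.2.1⟩ hzero)
  by_contra! hs
  obtain ⟨k, hk⟩ := ((h s hs).eventually_gt_atTop C).exists
  have hpow : 0 < ‖ξ k‖ ^ (-s / 2) := rpow_pos_of_pos (norm_pos_iff.mpr (hξ k)) _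
  exact hk.not_ge ((div_le_iff₀ hpow).mpr (hC _ (hξ k)))

lemma fDim1_eq_one_of_decay (h : ∃ C, ∀ ξ : ℝ, ξ ≠ 0 → ‖FT1 ρ ξ‖ ≤ C * ‖ξ‖ ^ (-1 / 2 : ℝ)) :
    fDim1 ρ = 1 :=
  le_antisymm (csSup_le ⟨1, zero_le_one, le_rfl, h⟩ fun _ hs => hs.2.1)
    (le_csSup ⟨1, fun _ hs => hs.2.1⟩ ⟨zero_le_one, le_rfl, h⟩)

end FourierDimension

noncomputable def densityMeasure (d : ℝ → ℝ) : Measure ℝ :=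
  (volume.restrict (Icc (0:ℝ) 1)).withDensity fun x => ENNReal.ofReal (d x)

section DensityMeasure

variable {d : ℝ → ℝ}

lemma densityMeasure_apply_of_Icc_subset (hd : Continuous d) (hd0 : ∀ x, 0 ≤ d x)
    {s : Set ℝ} (hs : MeasurableSet s) (hsub : Icc 0 1 ⊆ s) :
    densityMeasure d s = ENNReal.ofReal (∫ x in (0:ℝ)..1, d x) := by
  rw [densityMeasure, withDensity_apply _ hs, Measure.restrict_restrict hs,
    inter_eq_self_of_subset_right hsub,
    ← ofReal_integral_eq_lintegral_ofReal hd.integrableOn_Icc (ae_of_all _ hd0),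
    integral_Icc_eq_integral_Ioc, intervalIntegral.integral_of_le zero_le_one]

lemma isProbabilityMeasure_densityMeasure (hd : Continuous d) (hd0 : ∀ x, 0 ≤ d x)
    (h1 : ∫ x in (0:ℝ)..1, d x = 1) : IsProbabilityMeasure (densityMeasure d) :=
  ⟨by rw [densityMeasure_apply_of_Icc_subset hd hd0 MeasurableSet.univ (subset_univ _), h1,
    ENNReal.ofReal_one]⟩

lemma FT1_densityMeasure (hd : Measurable d) (hd0 : ∀ x, 0 ≤ d x) (ξ : ℝ) :
    FT1 (densityMeasure d) ξ = ∫ x in (0:ℝ)..1, (d x : ℂ) * fourierKernel ξ x := by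
  rw [FT1_eq_integral_fourierKernel, densityMeasure,
    integral_withDensity_eq_integral_toReal_smul hd.ennreal_ofReal
      (ae_of_all _ fun _ => ENNReal.ofReal_lt_top),
    intervalIntegral.integral_of_le zero_le_one, ← integral_Icc_eq_integral_Ioc]
  congr 1 with x
  rw [ENNReal.toReal_ofReal (hd0 x), Complex.real_smul]

lemma densityMeasure_add {d' : ℝ → ℝ} (hd : Measurable d) (hd0 : ∀ x, 0 ≤ d x)
    (hd'0 : ∀ x, 0 ≤ d' x) : densityMeasure d + densityMeasure d' = densityMeasure (d + d') := by
  rw [densityMeasure, densityMeasure, densityMeasure, ← withDensity_add_left hd.ennreal_ofReal]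
  congr 1 with x
  simp [ENNReal.ofReal_add (hd0 x) (hd'0 x)]

end DensityMeasure

noncomputable def sineSeries (a : ℕ → ℝ) (N : ℕ → ℕ) (x : ℝ) : ℝ :=
  ∑' k, a k * sin (2 * π * N k * x)

lemma abs_mul_sin_le (c θ : ℝ) : |c * sin θ| ≤ |c| := by
  rw [abs_mul]
  exact mul_le_of_le_one_right (abs_nonneg c) (abs_sin_le_one θ)

section SineSeries

variable {a : ℕ → ℝ} (N : ℕ → ℕ) (ha : Summable fun k => |a k|)
include ha

lemma summable_sineSeries (x : ℝ) : Summable fun k => a k * sin (2 * π * N k * x) :=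
  Summable.of_norm_bounded ha fun _ => abs_mul_sin_le _ _

lemma abs_sineSeries_le (x : ℝ) : |sineSeries a N x| ≤ ∑' k, |a k| :=
  tsum_of_norm_bounded (f := fun k => a k * sin (2 * π * N k * x)) ha.hasSum
    fun _ => abs_mul_sin_le _ _

lemma continuous_sineSeries : Continuous (sineSeries a N) :=
  continuous_tsum (fun k => by fun_prop) ha fun _ _ => abs_mul_sin_le _ _

variable (hN : ∀ k, 0 < N k)
include hN

lemma hasSum_integral_sineSeries_mul_fourierKernel (m : ℕ) :
    HasSum (fun k => (a k : ℂ) * if N k = m then -(I / 2) else 0)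
      (∫ x in (0:ℝ)..1, (sineSeries a N x : ℂ) * fourierKernel m x) := by
  have hterm (k : ℕ) : ∫ x in (0:ℝ)..1, ((a k * sin (2 * π * N k * x) : ℝ) : ℂ) *
      fourierKernel m x = (a k : ℂ) * if N k = m then -(I / 2) else 0 := by
    rw [← integral_sin_mul_fourierKernel _ _ (hN k), ← intervalIntegral.integral_const_mul]
    congr 1 with x
    push_cast
    ring
  simp_rw [← hterm]
  refine intervalIntegral.hasSum_integral_of_dominated_convergence (fun k _ => |a k|)
    (fun k => (by fun_prop : Continuous _).aestronglyMeasurable)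
    (fun k => ae_of_all _ fun x _ => ?_) (ae_of_all _ fun _ _ => ha) intervalIntegrable_const
    (ae_of_all _ fun x _ =>
      (Complex.hasSum_ofReal.mpr (summable_sineSeries N ha x).hasSum).mul_right _)
  rw [norm_mul, norm_fourierKernel, mul_one, Complex.norm_real]
  exact abs_mul_sin_le _ _

lemma integral_sineSeries_mul_fourierKernel_of_injective (hinj : N.Injective) (j : ℕ) :
    ∫ x in (0:ℝ)..1, (sineSeries a N x : ℂ) * fourierKernel (N j) x = a j * -(I / 2) := by
  refine (hasSum_integral_sineSeries_mul_fourierKernel N ha hN (N j)).unique ?_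
  simpa using hasSum_single (f := fun k => (a k : ℂ) * if N k = N j then -(I / 2) else 0) j
    fun k hk => by simp [hinj.ne hk]

lemma integral_sineSeries : ∫ x in (0:ℝ)..1, sineSeries a N x = 0 := by
  have h := hasSum_integral_sineSeries_mul_fourierKernel N ha hN 0
  simp only [(hN _).ne', if_false, mul_zero, fourierKernel, Nat.cast_zero, zero_mul,
    Complex.ofReal_zero, neg_zero, Complex.exp_zero, mul_one,
    intervalIntegral.integral_ofReal] at h
  exact_mod_cast h.unique hasSum_zero

end SineSeries

def lacunaryFreq (k : ℕ) : ℕ := 2 ^ ((k + 1) ^ 2)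

noncomputable def lacunaryCoeff (k : ℕ) : ℝ := 2 ^ (-((k : ℝ) + 1))

lemma lacunaryFreq_pos (k : ℕ) : 0 < lacunaryFreq k := by unfold lacunaryFreq; positivity

lemma lacunaryFreq_injective : lacunaryFreq.Injective := fun j k h => by
  have := Nat.pow_right_injective le_rfl h
  simpa using Nat.pow_left_injective two_ne_zero this

lemma lacunaryFreq_cast (k : ℕ) : (lacunaryFreq k : ℝ) = 2 ^ (((k : ℝ) + 1) ^ 2) := by
  rw [show ((k : ℝ) + 1) ^ 2 = ((k + 1) ^ 2 : ℕ) by push_cast; ring, rpow_natCast, lacunaryFreq]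
  push_cast
  rfl

lemma lacunaryCoeff_eq (k : ℕ) : lacunaryCoeff k = 2⁻¹ ^ (k + 1) := by
  rw [lacunaryCoeff, rpow_neg zero_le_two, show (k : ℝ) + 1 = (k + 1 : ℕ) by push_cast; rfl,
    rpow_natCast, inv_pow]

lemma hasSum_abs_lacunaryCoeff : HasSum (fun k => |lacunaryCoeff k|) 1 := by
  convert hasSum_geometric_two' (1 : ℝ) using 2 with k
  rw [lacunaryCoeff_eq, abs_of_pos (by positivity), pow_succ, inv_pow]
  field_simp

lemma tendsto_lacunaryCoeff_div_rpow_lacunaryFreq {s : ℝ} (hs : 0 < s) :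
    Tendsto (fun k => lacunaryCoeff k / 2 / (lacunaryFreq k : ℝ) ^ (-s / 2)) atTop atTop := by
  have hk : Tendsto (fun k : ℕ => (k : ℝ) + 1) atTop atTop :=
    tendsto_atTop_add_const_right _ 1 tendsto_natCast_atTop_atTop
  have hexp : Tendsto (fun k : ℕ => ((k : ℝ) + 1) * (s / 2 * ((k : ℝ) + 1) - 1) - 1)
      atTop atTop :=
    tendsto_atTop_add_const_right _ (-1) <| hk.atTop_mul_atTop₀ <|
      tendsto_atTop_add_const_right _ (-1) (hk.const_mul_atTop (by positivity))
  -- the ratio is `2 ^ ((k + 1) * (s / 2 * (k + 1) - 1) - 1)`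
  refine ((tendsto_rpow_atTop_of_base_gt_one 2 one_lt_two).comp hexp).congr fun k => ?_
  rw [Function.comp_apply, lacunaryCoeff, lacunaryFreq_cast, ← rpow_mul zero_le_two,
    ← rpow_sub_one two_ne_zero, ← rpow_sub two_pos]
  ring_nf

lemma fDim1_eq_zero_of_norm_FT1_lacunaryFreq (ρ : Measure ℝ) [IsFiniteMeasure ρ]
    (h : ∀ k, ‖FT1 ρ (lacunaryFreq k)‖ = lacunaryCoeff k / 2) : fDim1 ρ = 0 :=
  fDim1_eq_zero_of_tendsto ρ (fun k => lacunaryFreq k)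
    (fun k => Nat.cast_ne_zero.mpr (lacunaryFreq_pos k).ne') fun s hs => by
      simpa only [h, Real.norm_natCast] using tendsto_lacunaryCoeff_div_rpow_lacunaryFreq hs

lemma gdens_eq_one_add_sineSeries (x : ℝ) :
    gdens x = 1 + sineSeries lacunaryCoeff lacunaryFreq x := by
  simp only [gdens, sineSeries, lacunaryCoeff, lacunaryFreq_cast]

lemma gdens_mem_Icc (x : ℝ) : gdens x ∈ Icc 0 2 := by
  have h := abs_sineSeries_le lacunaryFreq hasSum_abs_lacunaryCoeff.summable x
  rw [hasSum_abs_lacunaryCoeff.tsum_eq, abs_le] at h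
  rw [gdens_eq_one_add_sineSeries]
  constructor <;> linarith

lemma gdens_nonneg (x : ℝ) : 0 ≤ gdens x := (gdens_mem_Icc x).1

lemma hdens_nonneg (x : ℝ) : 0 ≤ hdens x := sub_nonneg.mpr (gdens_mem_Icc x).2

lemma continuous_gdens : Continuous gdens := by
  have h := continuous_sineSeries lacunaryFreq hasSum_abs_lacunaryCoeff.summable
  exact (continuous_const.add h).congr fun x => (gdens_eq_one_add_sineSeries x).symm

lemma continuous_hdens : Continuous hdens := continuous_const.sub continuous_gdens

lemma integral_gdens : ∫ x in (0:ℝ)..1, gdens x = 1 := by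
  simp_rw [gdens_eq_one_add_sineSeries]
  rw [intervalIntegral.integral_add intervalIntegrable_const
      ((continuous_sineSeries _ hasSum_abs_lacunaryCoeff.summable).intervalIntegrable 0 1),
    integral_sineSeries _ hasSum_abs_lacunaryCoeff.summable lacunaryFreq_pos]
  simp

lemma integral_hdens : ∫ x in (0:ℝ)..1, hdens x = 1 := by
  unfold hdens
  rw [intervalIntegral.integral_sub intervalIntegrable_const
    (continuous_gdens.intervalIntegrable 0 1), integral_gdens]
  norm_num

lemma integral_gdens_mul_fourierKernel_lacunaryFreq (k : ℕ) :
    ∫ x in (0:ℝ)..1, (gdens x : ℂ) * fourierKernel (lacunaryFreq k) x =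
      lacunaryCoeff k * -(I / 2) := by
  have hS := continuous_sineSeries lacunaryFreq hasSum_abs_lacunaryCoeff.summable
  simp_rw [gdens_eq_one_add_sineSeries, Complex.ofReal_add, Complex.ofReal_one, add_mul, one_mul]
  rw [intervalIntegral.integral_add ((continuous_fourierKernel _).intervalIntegrable 0 1)
      ((by fun_prop : Continuous _).intervalIntegrable 0 1),
    integral_fourierKernel_natCast (lacunaryFreq_pos k).ne', zero_add,
    integral_sineSeries_mul_fourierKernel_of_injective _ hasSum_abs_lacunaryCoeff.summable
      lacunaryFreq_pos lacunaryFreq_injective]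

instance : IsProbabilityMeasure (densityMeasure gdens) :=
  isProbabilityMeasure_densityMeasure continuous_gdens gdens_nonneg integral_gdens

instance : IsProbabilityMeasure (densityMeasure hdens) :=
  isProbabilityMeasure_densityMeasure continuous_hdens hdens_nonneg integral_hdens

lemma densityMeasure_gdens_add_hdens :
    densityMeasure gdens + densityMeasure hdens = densityMeasure fun _ => 2 := by
  rw [densityMeasure_add continuous_gdens.measurable gdens_nonneg hdens_nonneg]
  congr 1 with x
  simp [hdens]

lemma FT1_densityMeasure_gdens_add_hdens (ξ : ℝ) :
    FT1 (densityMeasure gdens + densityMeasure hdens) ξ =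
      2 * ∫ x in (0:ℝ)..1, fourierKernel ξ x := by
  rw [densityMeasure_gdens_add_hdens, FT1_densityMeasure measurable_const (fun _ => zero_le_two),
    ← intervalIntegral.integral_const_mul]
  push_cast
  rfl

lemma norm_FT1_densityMeasure_gdens_lacunaryFreq (k : ℕ) :
    ‖FT1 (densityMeasure gdens) (lacunaryFreq k)‖ = lacunaryCoeff k / 2 := by
  rw [FT1_densityMeasure continuous_gdens.measurable gdens_nonneg,
    integral_gdens_mul_fourierKernel_lacunaryFreq, lacunaryCoeff]
  simp [abs_of_pos (rpow_pos_of_pos two_pos _), div_eq_mul_inv]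

lemma norm_FT1_densityMeasure_hdens_lacunaryFreq (k : ℕ) :
    ‖FT1 (densityMeasure hdens) (lacunaryFreq k)‖ = lacunaryCoeff k / 2 := by
  have h := FT1_add (densityMeasure gdens) (densityMeasure hdens) (lacunaryFreq k)
  rw [FT1_densityMeasure_gdens_add_hdens,
    integral_fourierKernel_natCast (lacunaryFreq_pos k).ne', mul_zero] at h
  rw [eq_neg_of_add_eq_zero_right h.symm, norm_neg, norm_FT1_densityMeasure_gdens_lacunaryFreq]

lemma fDim1_densityMeasure_gdens_add_hdens :
    fDim1 (densityMeasure gdens + densityMeasure hdens) = 1 :=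
  fDim1_eq_one_of_decay _ ⟨2, fun ξ hξ => by
    rw [FT1_densityMeasure_gdens_add_hdens, norm_mul, Complex.norm_two]
    gcongr
    exact norm_integral_fourierKernel_le_rpow hξ⟩

theorem stmt9 :
    ∃ μ ν : Measure ℝ,
      μ = (volume.restrict (Set.Icc (0:ℝ) 1)).withDensity
            (fun x => ENNReal.ofReal (gdens x)) ∧
      ν = (volume.restrict (Set.Icc (0:ℝ) 1)).withDensity
            (fun x => ENNReal.ofReal (hdens x)) ∧
      IsProbabilityMeasure μ ∧ IsProbabilityMeasure ν ∧
      μ (Set.Icc (0:ℝ) 1) = 1 ∧ ν (Set.Icc (0:ℝ) 1) = 1 ∧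
      fDim1 μ = 0 ∧ fDim1 ν = 0 ∧ fDim1 (μ + ν) = 1 := by
  refine ⟨densityMeasure gdens, densityMeasure hdens, rfl, rfl, inferInstance, inferInstance,
    ?_, ?_, ?_, ?_, fDim1_densityMeasure_gdens_add_hdens⟩
  · rw [densityMeasure_apply_of_Icc_subset continuous_gdens gdens_nonneg measurableSet_Icc
      subset_rfl, integral_gdens, ENNReal.ofReal_one]
  · rw [densityMeasure_apply_of_Icc_subset continuous_hdens hdens_nonneg measurableSet_Icc
      subset_rfl, integral_hdens, ENNReal.ofReal_one]
  · exact fDim1_eq_zero_of_norm_FT1_lacunaryFreq _ norm_FT1_densityMeasure_gdens_lacunaryFreq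
  · exact fDim1_eq_zero_of_norm_FT1_lacunaryFreq _ norm_FT1_densityMeasure_hdens_lacunaryFreq
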